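/- Let p be a prime and R a perfect 𝔽_p-algebra with the trivial norm, and let W(R) carry the normalized p-adic norm. For any multiplicative seminorm β on W(R) bounded above by the p-adic norm, we have (λ ∘ μ)(β) ≥ β pointwise; that is, for every x ∈ W(R), λ(μ(β))(x) ≥ β(x). -/

import Mathlib

open scoped NNReal

/-- A multiplicative (nonarchimedean) seminorm on a commutative ring. -/
def IsMultSeminorm {A : Type*} [CommRing A] (α : A → ℝ≥0) : Prop :=
  α 0 = 0 ∧ (∀ g h : A, α (g - h) ≤ max (α g) (α h)) ∧
    α 1 = 1 ∧ ∀ g h : A, α (g * h) = α g * α h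

/-- The trivial norm on a ring: `0 ↦ 0` and every nonzero element to `1`. -/
noncomputable def trivialNorm {A : Type*} [CommRing A] (a : A) : ℝ≥0 :=
  open scoped Classical in
  if a = 0 then 0 else 1

/-- For `R` a perfect `𝔽_p`-algebra and `x ∈ W(R)` with Teichmüller expansion
`x = ∑_{i≥0} p^i [x_i]`, this is `x_i`: the unique `p^i`-th root in `R` of the
`i`-th Witt coordinate of `x`. -/
noncomputable def teichCoeff (p : ℕ) [Fact p.Prime] {R : Type*} [CommRing R]
    [ExpChar R p] [PerfectRing R p] (x : WittVector p R) (i : ℕ) : R :=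
  (⇑(frobeniusEquiv R p).symm)^[i] (x.coeff i)

/-- The normalized `p`-adic norm on `W(R)`: it sends `0` to `0` and a nonzero
`x = ∑ p^i [x_i]` to `p^{-j}`, where `j` is the least index with `x_j ≠ 0`. -/
noncomputable def padicNormWitt (p : ℕ) [Fact p.Prime] {R : Type*} [CommRing R]
    [ExpChar R p] [PerfectRing R p] (x : WittVector p R) : ℝ≥0 :=
  ⨆ i : ℕ, (p : ℝ≥0)⁻¹ ^ i * trivialNorm (teichCoeff p x i)

/-- The map `λ` on seminorms: `λ(α)(∑ p^i [x_i]) = sup_i p^{-i} α(x_i)`. -/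
noncomputable def lambdaSeminorm (p : ℕ) [Fact p.Prime] {R : Type*} [CommRing R]
    [ExpChar R p] [PerfectRing R p] (α : R → ℝ≥0) (x : WittVector p R) : ℝ≥0 :=
  ⨆ i : ℕ, (p : ℝ≥0)⁻¹ ^ i * α (teichCoeff p x i)

/-- The map `μ` on seminorms: `μ(β)(x) = β([x])`, with `[·]` the Teichmüller map. -/
noncomputable def muSeminorm (p : ℕ) [Fact p.Prime] {R : Type*} [CommRing R]
    (β : WittVector p R → ℝ≥0) (x : R) : ℝ≥0 :=
  β (WittVector.teichmuller p x)

/-!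
Write `x = [x₀] + p·w`, where `w = F⁻¹(shift x)` has Teichmüller coefficients `wᵢ = x_{i+1}`.
Since `β` is nonarchimedean with `β(p) ≤ p⁻¹` and `β ≤ 1`, induction on `n` gives
`β(x) ≤ max(λ(μ(β))(x), p⁻ⁿ)` for every `n`, and letting `n → ∞` proves the claim.
-/

section

open WittVector

variable {p : ℕ} [hp : Fact p.Prime] {R : Type*} [CommRing R]

theorem charP_of_expChar_prime [ExpChar R p] : CharP R p := by
  obtain _ | _ := ‹ExpChar R p›
  · exact absurd hp.out Nat.not_prime_one
  · assumption

namespace WittVector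

theorem eq_teichmuller_add_verschiebung_shift_one (x : WittVector p R) :
    x = teichmuller p (x.coeff 0) + verschiebung (x.shift 1) := by
  have hdisj : ∀ n, (teichmuller p (x.coeff 0)).coeff n = 0 ∨
      (verschiebung (x.shift 1)).coeff n = 0 := by
    rintro (_ | n)
    · exact Or.inr (verschiebung_coeff_zero _)
    · exact Or.inl (teichmuller_coeff_pos p _ _ n.succ_pos)
  ext (_ | n) <;>
    simp [coeff_add_of_disjoint _ _ _ hdisj, teichmuller_coeff_pos, shift_coeff, add_comm]

theorem eq_teichmuller_add_p_mul [CharP R p] [PerfectRing R p] (x : WittVector p R) :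
    x = teichmuller p (x.coeff 0) + p * (frobeniusEquiv p R).symm (x.shift 1) := by
  conv_lhs => rw [eq_teichmuller_add_verschiebung_shift_one x]
  rw [mul_comm, ← verschiebung_frobenius, ← frobeniusEquiv_apply, RingEquiv.apply_symm_apply]

end WittVector

theorem teichCoeff_frobeniusEquiv_symm_shift_one [CharP R p] [PerfectRing R p]
    (x : WittVector p R) (i : ℕ) :
    teichCoeff p ((WittVector.frobeniusEquiv p R).symm (x.shift 1)) i = teichCoeff p x (i + 1) := by
  rw [teichCoeff, teichCoeff, Function.iterate_succ_apply, frobeniusEquiv_symm_apply, map_coeff,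
    shift_coeff, add_comm]
  rfl

theorem trivialNorm_le_one {A : Type*} [CommRing A] (a : A) : trivialNorm a ≤ 1 := by
  unfold trivialNorm
  split_ifs <;> simp

namespace IsMultSeminorm

variable {A : Type*} [CommRing A] {α : A → ℝ≥0}

theorem map_neg (hα : IsMultSeminorm α) (a : A) : α (-a) = α a := by
  obtain ⟨h0, hsub, -⟩ := hα
  apply le_antisymm
  · simpa [h0] using hsub 0 a
  · simpa [h0] using hsub 0 (-a)

theorem map_add_le_max (hα : IsMultSeminorm α) (a b : A) : α (a + b) ≤ max (α a) (α b) := by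
  simpa [hα.map_neg] using hα.2.1 a (-b)

theorem map_mul (hα : IsMultSeminorm α) (a b : A) : α (a * b) = α a * α b :=
  hα.2.2.2 a b

end IsMultSeminorm

section Seminorms

variable [CharP R p] [PerfectRing R p]

theorem inv_natCast_pow_le_one (i : ℕ) : (p : ℝ≥0)⁻¹ ^ i ≤ 1 :=
  pow_le_one₀ zero_le (inv_le_one_of_one_le₀ (by exact_mod_cast hp.out.one_le))

theorem padicNormWitt_le_one (x : WittVector p R) : padicNormWitt p x ≤ 1 :=
  ciSup_le fun i => mul_le_one' (inv_natCast_pow_le_one i) (trivialNorm_le_one _)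

theorem padicNormWitt_natCast_le : padicNormWitt p (p : WittVector p R) ≤ (p : ℝ≥0)⁻¹ := by
  refine ciSup_le fun i => ?_
  cases i with
  | zero => simp [teichCoeff, coeff_p_zero, trivialNorm]
  | succ i =>
    calc (p : ℝ≥0)⁻¹ ^ (i + 1) * trivialNorm (teichCoeff p (p : WittVector p R) (i + 1))
        ≤ (p : ℝ≥0)⁻¹ ^ i * (p : ℝ≥0)⁻¹ := by
          rw [pow_succ]; exact mul_le_of_le_one_right zero_le (trivialNorm_le_one _)
      _ ≤ (p : ℝ≥0)⁻¹ := mul_le_of_le_one_left zero_le (inv_natCast_pow_le_one i)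

variable {α : R → ℝ≥0}

theorem le_lambdaSeminorm (hα : ∀ r, α r ≤ 1) (x : WittVector p R) (i : ℕ) :
    (p : ℝ≥0)⁻¹ ^ i * α (teichCoeff p x i) ≤ lambdaSeminorm p α x := by
  refine le_ciSup (f := fun j => (p : ℝ≥0)⁻¹ ^ j * α (teichCoeff p x j)) ⟨1, ?_⟩ i
  rintro _ ⟨j, rfl⟩
  exact mul_le_one' (inv_natCast_pow_le_one j) (hα _)

theorem inv_mul_lambdaSeminorm_le (hα : ∀ r, α r ≤ 1) {x w : WittVector p R}
    (hw : ∀ i, teichCoeff p w i = teichCoeff p x (i + 1)) :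
    (p : ℝ≥0)⁻¹ * lambdaSeminorm p α w ≤ lambdaSeminorm p α x :=
  NNReal.mul_iSup_le fun i => by
    simpa [hw, pow_succ', mul_assoc] using le_lambdaSeminorm hα x (i + 1)

variable {β : WittVector p R → ℝ≥0}

theorem le_max_lambdaSeminorm_muSeminorm (hβ : IsMultSeminorm β) (hβ1 : ∀ x, β x ≤ 1)
    (hβp : β p ≤ (p : ℝ≥0)⁻¹) (n : ℕ) (x : WittVector p R) :
    β x ≤ max (lambdaSeminorm p (muSeminorm p β) x) ((p : ℝ≥0)⁻¹ ^ n) := by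
  have hμ : ∀ r, muSeminorm p β r ≤ 1 := fun r => hβ1 _
  induction n generalizing x with
  | zero => exact le_max_of_le_right (by simpa using hβ1 x)
  | succ n ih =>
    set w := (WittVector.frobeniusEquiv p R).symm (x.shift 1)
    have hw := teichCoeff_frobeniusEquiv_symm_shift_one x
    have hx₀ : β (teichmuller p (x.coeff 0)) ≤ lambdaSeminorm p (muSeminorm p β) x := by
      simpa [muSeminorm, teichCoeff] using le_lambdaSeminorm hμ x 0
    have hpw : β (p * w) ≤ max (lambdaSeminorm p (muSeminorm p β) x) ((p : ℝ≥0)⁻¹ ^ (n + 1)) :=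
      calc β (p * w) = β p * β w := hβ.map_mul _ _
        _ ≤ (p : ℝ≥0)⁻¹ * max (lambdaSeminorm p (muSeminorm p β) w) ((p : ℝ≥0)⁻¹ ^ n) :=
          mul_le_mul' hβp (ih w)
        _ = max ((p : ℝ≥0)⁻¹ * lambdaSeminorm p (muSeminorm p β) w) ((p : ℝ≥0)⁻¹ ^ (n + 1)) := by
          rw [mul_max_of_nonneg _ _ zero_le, pow_succ']
        _ ≤ _ := max_le_max_right _ (inv_mul_lambdaSeminorm_le hμ hw)
    calc β x = β (teichmuller p (x.coeff 0) + p * w) := congrArg β (eq_teichmuller_add_p_mul x)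
      _ ≤ _ := hβ.map_add_le_max _ _
      _ ≤ _ := max_le (le_max_of_le_left hx₀) hpw

end Seminorms

theorem le_of_forall_le_max_pow {a b r : ℝ≥0} (hr : r < 1) (h : ∀ n : ℕ, a ≤ max b (r ^ n)) :
    a ≤ b := by
  have hlim := (tendsto_const_nhds (x := b)).max (NNReal.tendsto_pow_atTop_nhds_zero_of_lt_one hr)
  rw [max_eq_left zero_le] at hlim
  exact ge_of_tendsto' hlim h

end

theorem lambda_comp_mu_ge_id (p : ℕ) [Fact p.Prime] {R : Type*}
    [CommRing R] [ExpChar R p] [PerfectRing R p]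
    (β : WittVector p R → ℝ≥0) (hβ : IsMultSeminorm β)
    (hβb : ∀ x : WittVector p R, β x ≤ padicNormWitt p x) :
    ∀ x : WittVector p R, β x ≤ lambdaSeminorm p (muSeminorm p β) x := by
  intro x
  have := charP_of_expChar_prime (p := p) (R := R)
  have hβ1 : ∀ y, β y ≤ 1 := fun y => (hβb y).trans (padicNormWitt_le_one y)
  have hβp : β p ≤ (p : ℝ≥0)⁻¹ := (hβb _).trans padicNormWitt_natCast_le
  have hp_inv : (p : ℝ≥0)⁻¹ < 1 := inv_lt_one_of_one_lt₀ (by exact_mod_cast ‹Fact p.Prime›.out.one_lt)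
  exact le_of_forall_le_max_pow hp_inv fun n => le_max_lambdaSeminorm_muSeminorm hβ hβ1 hβp n x
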